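/- Let m be a positive integer and let a, b, c be real numbers with a > 0, b ≥ 0 and c > 0. Then Σ_{i=1}^m (Γ(c−i+m)·Γ(a+b+i+m)/(Γ(a+i)·Γ(m−i+1)·i)) · ψ₀(a+b+i+m) = Γ(c+m)·Γ(a+b+m) · ( (ψ₀(a+b+m)/(Γ(a)·Γ(m+1)))·(ψ₀(c+m) − ψ₀(c)) + Γ(b+m+1)·Γ(c) · Σ_{i=1}^m (ψ₀(a+b+m) − ψ₀(b−i+m+1) + ψ₀(b+m+1))/(Γ(a+i)·Γ(c+i)·Γ(m−i+1)·Γ(b−i+m+1)·i) ). -/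

import Mathlib

open Real Finset

/-- The digamma function `ψ₀(x) = Γ′(x)/Γ(x)` on the reals. -/
noncomputable def rdigamma (x : ℝ) : ℝ := deriv Real.Gamma x / Real.Gamma x

variable {R : Type*} [CommRing R]

/-- rising factorial -/
def rf (x : R) (n : ℕ) : R := ∏ j ∈ Finset.range n, (x + j)

/-- falling factorial -/
def ffa (x : R) (n : ℕ) : R := ∏ j ∈ Finset.range n, (x - j)

@[simp] lemma rf_zero (x : R) : rf x 0 = 1 := by simp [rf]

@[simp] lemma ffa_zero (x : R) : ffa x 0 = 1 := by simp [ffa]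

lemma rf_succ (x : R) (n : ℕ) : rf x (n + 1) = rf x n * (x + n) := by
  simp [rf, Finset.prod_range_succ]

lemma ffa_succ (x : R) (n : ℕ) : ffa x (n + 1) = ffa x n * (x - n) := by
  simp [ffa, Finset.prod_range_succ]

lemma rf_succ' (x : R) (n : ℕ) : rf x (n + 1) = x * rf (x + 1) n := by
  simp only [rf, Finset.prod_range_succ', Nat.cast_add, Nat.cast_zero, Nat.cast_one, add_zero]
  rw [mul_comm]
  congr 1
  apply Finset.prod_congr rfl
  intro j _
  ring

lemma rf_add_nat (x : R) (m n : ℕ) : rf x (m + n) = rf x m * rf (x + m) n := by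
  induction n with
  | zero => simp
  | succ n ih =>
    rw [show m + (n+1) = (m+n)+1 by ring, rf_succ, ih, rf_succ, mul_assoc]
    congr 2
    push_cast
    ring

@[simp] lemma rf_one (x : R) : rf x 1 = x := by simp [rf]

/-- rising-factorial Chu–Vandermonde -/
lemma rf_vandermonde (n : ℕ) (x y : R) :
    rf (x + y) n = ∑ i ∈ Finset.range (n + 1), (n.choose i : R) * rf x i * rf y (n - i) := by
  induction n generalizing x y with
  | zero => simp
  | succ n ih =>
    have key : ∑ i ∈ Finset.range (n + 2), ((n+1).choose i : R) * rf x i * rf y (n + 1 - i)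
        = (∑ i ∈ Finset.range (n + 1), (n.choose i : R) * rf x (i+1) * rf y (n - i))
          + ∑ i ∈ Finset.range (n + 1), (n.choose i : R) * rf x i * rf y (n + 1 - i) := by
      rw [Finset.sum_range_succ' (fun i => ((n+1).choose i : R) * rf x i * rf y (n + 1 - i)) (n+1)]
      have e1 : ∀ i ∈ Finset.range (n+1),
          ((n+1).choose (i+1) : R) * rf x (i+1) * rf y (n + 1 - (i+1))
          = (n.choose i : R) * rf x (i+1) * rf y (n - i)
            + (n.choose (i+1) : R) * rf x (i+1) * rf y (n - i) := by
        intro i _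
        rw [Nat.choose_succ_succ]
        simp only [Nat.succ_eq_add_one]
        push_cast
        ring
      rw [Finset.sum_congr rfl e1, Finset.sum_add_distrib]
      have e2 : (∑ i ∈ Finset.range (n+1), (n.choose (i+1) : R) * rf x (i+1) * rf y (n - i))
            + ((n+1).choose 0 : R) * rf x 0 * rf y (n + 1 - 0)
          = ∑ i ∈ Finset.range (n + 1), (n.choose i : R) * rf x i * rf y (n + 1 - i) := by
        have h0 : ∀ i ∈ Finset.range (n+1), (n.choose (i+1) : R) * rf x (i+1) * rf y (n - i)
            = (fun i => (n.choose i : R) * rf x i * rf y (n + 1 - i)) (i+1) := by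
          intro i _
          simp only
          rw [show n + 1 - (i+1) = n - i by omega]
        rw [Finset.sum_congr rfl h0, show ((n+1).choose 0 : R) = (n.choose 0 : R) by simp,
          ← Finset.sum_range_succ' (fun i => (n.choose i : R) * rf x i * rf y (n + 1 - i)) (n+1),
          Finset.sum_range_succ]
        simp [Nat.choose_succ_self]
      rw [add_assoc, e2]
    rw [key]
    have comb : (∑ i ∈ Finset.range (n + 1), (n.choose i : R) * rf x (i+1) * rf y (n - i))
          + ∑ i ∈ Finset.range (n + 1), (n.choose i : R) * rf x i * rf y (n + 1 - i)
        = (x + y + n) * ∑ i ∈ Finset.range (n + 1), (n.choose i : R) * rf x i * rf y (n - i) := by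
      rw [← Finset.sum_add_distrib, Finset.mul_sum]
      apply Finset.sum_congr rfl
      intro i hi
      have hin : i ≤ n := by simpa [Nat.lt_succ_iff] using hi
      rw [rf_succ, show n + 1 - i = (n - i) + 1 by omega, rf_succ]
      have hc : ((n - i : ℕ) : R) = (n : R) - (i : R) := by
        push_cast [hin]; ring
      rw [hc]
      ring
    rw [comb, ← ih, rf_succ]
    ring

/-- mixed falling/rising Vandermonde -/
lemma rf_inner (n : ℕ) (y a : R) :
    ∑ i ∈ Finset.range (n + 1), (n.choose i : R) * ffa y i * rf (a + i) (n - i)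
      = rf (a + y) n := by
  induction n generalizing y a with
  | zero => simp
  | succ n ih =>
    have key : ∑ i ∈ Finset.range (n + 2), ((n+1).choose i : R) * ffa y i * rf (a + i) (n + 1 - i)
        = (∑ i ∈ Finset.range (n + 1), (n.choose i : R) * ffa y (i+1) * rf (a + (i+1 : ℕ)) (n - i))
          + ∑ i ∈ Finset.range (n + 1), (n.choose i : R) * ffa y i * rf (a + i) (n + 1 - i) := by
      rw [Finset.sum_range_succ' (fun i => ((n+1).choose i : R) * ffa y i * rf (a + i) (n + 1 - i)) (n+1)]
      have e1 : ∀ i ∈ Finset.range (n+1),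
          ((n+1).choose (i+1) : R) * ffa y (i+1) * rf (a + (i+1 : ℕ)) (n + 1 - (i+1))
          = (n.choose i : R) * ffa y (i+1) * rf (a + (i+1 : ℕ)) (n - i)
            + (n.choose (i+1) : R) * ffa y (i+1) * rf (a + (i+1 : ℕ)) (n - i) := by
        intro i _
        rw [Nat.choose_succ_succ]
        simp only [Nat.succ_eq_add_one]
        push_cast
        ring
      rw [Finset.sum_congr rfl e1, Finset.sum_add_distrib]
      have e2 : (∑ i ∈ Finset.range (n+1), (n.choose (i+1) : R) * ffa y (i+1) * rf (a + (i+1 : ℕ)) (n - i))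
            + ((n+1).choose 0 : R) * ffa y 0 * rf (a + (0:ℕ)) (n + 1 - 0)
          = ∑ i ∈ Finset.range (n + 1), (n.choose i : R) * ffa y i * rf (a + i) (n + 1 - i) := by
        have h0 : ∀ i ∈ Finset.range (n+1), (n.choose (i+1) : R) * ffa y (i+1) * rf (a + (i+1 : ℕ)) (n - i)
            = (fun i => (n.choose i : R) * ffa y i * rf (a + i) (n + 1 - i)) (i+1) := by
          intro i _
          simp only
          rw [show n + 1 - (i+1) = n - i by omega]
        rw [Finset.sum_congr rfl h0, show ((n+1).choose 0 : R) = (n.choose 0 : R) by simp,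
          ← Finset.sum_range_succ' (fun i => (n.choose i : R) * ffa y i * rf (a + i) (n + 1 - i)) (n+1),
          Finset.sum_range_succ]
        simp [Nat.choose_succ_self]
      rw [add_assoc, e2]
    rw [key]
    have comb : (∑ i ∈ Finset.range (n + 1), (n.choose i : R) * ffa y (i+1) * rf (a + (i+1 : ℕ)) (n - i))
          + ∑ i ∈ Finset.range (n + 1), (n.choose i : R) * ffa y i * rf (a + i) (n + 1 - i)
        = (a + y) * ∑ i ∈ Finset.range (n + 1), (n.choose i : R) * ffa y i * rf ((a + 1) + i) (n - i) := by
      rw [← Finset.sum_add_distrib, Finset.mul_sum]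
      apply Finset.sum_congr rfl
      intro i hi
      have hin : i ≤ n := by simpa [Nat.lt_succ_iff] using hi
      rw [ffa_succ, show n + 1 - i = (n - i) + 1 by omega, rf_succ',
        show a + ((i:ℕ)+1 : ℕ) = (a + (i:ℕ)) + 1 by push_cast; ring]
      ring
    rw [comb, ih, rf_succ', show a + y + 1 = (a + 1) + y by ring]

/-- triangle sum reindex -/
lemma sum_triangle {M : Type*} [AddCommMonoid M] (m : ℕ) (f : ℕ → ℕ → M) :
    ∑ i ∈ Finset.range (m + 1), ∑ k ∈ Finset.range (m - i + 1), f i k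
      = ∑ n ∈ Finset.range (m + 1), ∑ i ∈ Finset.range (n + 1), f i (n - i) := by
  induction m with
  | zero => simp
  | succ m ih =>
    rw [Finset.sum_range_succ (fun i => ∑ k ∈ Finset.range (m + 1 - i + 1), f i k) (m+1)]
    have e1 : ∀ i ∈ Finset.range (m + 1),
        ∑ k ∈ Finset.range (m + 1 - i + 1), f i k
          = (∑ k ∈ Finset.range (m - i + 1), f i k) + f i (m + 1 - i) := by
      intro i hi
      have hin : i ≤ m := by simpa [Nat.lt_succ_iff] using hi
      rw [show m + 1 - i + 1 = (m - i + 1) + 1 by omega, Finset.sum_range_succ]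
      congr 2
      omega
    rw [Finset.sum_congr rfl e1, Finset.sum_add_distrib, ih]
    rw [Finset.sum_range_succ (fun n => ∑ i ∈ Finset.range (n + 1), f i (n - i)) (m+1)]
    rw [Finset.sum_range_succ (fun i => f i (m + 1 - i)) (m+1)]
    rw [show m + 1 - (m + 1) + 1 = 1 by omega, Finset.sum_range_one,
      show m + 1 - (m + 1) = 0 by omega, add_assoc]

/-- master polynomial identity (Sheppard-type transformation) -/
lemma master_identity (m : ℕ) (a b c e : R) :
    ∑ i ∈ Finset.range (m + 1),
        (m.choose i : R) * rf e i * rf (a + b + m) i * rf c (m - i) * rf (a + i) (m - i)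
      = ∑ i ∈ Finset.range (m + 1),
        (m.choose i : R) * rf e i * ffa (b + m) i * rf (c + i + e) (m - i) * rf (a + i) (m - i) := by
  -- expand the RHS with Vandermonde on rf (c+i+e) (m-i)
  have step1 : ∀ i ∈ Finset.range (m + 1),
      (m.choose i : R) * rf e i * ffa (b + m) i * rf (c + i + e) (m - i) * rf (a + i) (m - i)
        = ∑ k ∈ Finset.range (m - i + 1),
            (m.choose i : R) * ((m - i).choose k : R) * (rf e i * rf (e + i) k)
              * ffa (b + m) i * rf c (m - i - k) * rf (a + i) (m - i) := by
    intro i _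
    rw [show c + i + e = (e + (i:R)) + c by ring, rf_vandermonde (m - i) (e + i) c,
      Finset.mul_sum, Finset.sum_mul]
    apply Finset.sum_congr rfl
    intro k _
    ring
  rw [Finset.sum_congr rfl step1, sum_triangle m
    (fun i k => (m.choose i : R) * ((m - i).choose k : R) * (rf e i * rf (e + i) k)
      * ffa (b + m) i * rf c (m - i - k) * rf (a + i) (m - i))]
  apply Finset.sum_congr rfl
  intro n hn
  have hnm : n ≤ m := by simpa [Nat.lt_succ_iff] using hn
  have inner : ∀ i ∈ Finset.range (n + 1),
      (m.choose i : R) * ((m - i).choose (n - i) : R) * (rf e i * rf (e + i) (n - i))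
        * ffa (b + m) i * rf c (m - i - (n - i)) * rf (a + i) (m - i)
      = ((m.choose n : R) * rf e n * rf c (m - n) * rf (a + n) (m - n))
          * ((n.choose i : R) * ffa (b + m) i * rf (a + i) (n - i)) := by
    intro i hi
    have hin : i ≤ n := by simpa [Nat.lt_succ_iff] using hi
    have hchoose : (m.choose i : R) * ((m - i).choose (n - i) : R)
        = (m.choose n : R) * (n.choose i : R) := by
      rw [← Nat.cast_mul, ← Nat.cast_mul, ← Nat.choose_mul (n := m) hin]
    have hrfe : rf e i * rf (e + i) (n - i) = rf e n := by
      rw [← rf_add_nat, show i + (n - i) = n by omega]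
    have hrfa : rf (a + i) (m - i) = rf (a + i) (n - i) * rf (a + n) (m - n) := by
      have hcast : (a + (n:R)) = (a + (i:R)) + ((n - i : ℕ) : R) := by
        push_cast [hin]
        ring
      rw [hcast, ← rf_add_nat, show (n - i) + (m - n) = m - i by omega]
    rw [hchoose, hrfe, hrfa, show m - i - (n - i) = m - n by omega]
    ring
  rw [Finset.sum_congr rfl inner, ← Finset.mul_sum, rf_inner n (b + m) a]
  rw [show a + (b + (m:R)) = a + b + m by ring]
  ring

section PolyPart

open Polynomial

lemma rf_map {S : Type*} [CommRing S] (f : R →+* S) (x : R) (n : ℕ) :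
    f (rf x n) = rf (f x) n := by
  simp only [rf, map_prod, map_add, map_natCast]

lemma ffa_map {S : Type*} [CommRing S] (f : R →+* S) (x : R) (n : ℕ) :
    f (ffa x n) = ffa (f x) n := by
  simp only [ffa, map_prod, map_sub, map_natCast]

/-- eval at 0 of the derivative of the rising factorial of X -/
noncomputable def Dv (n : ℕ) : ℝ :=
  Polynomial.eval 0 (Polynomial.derivative (rf (Polynomial.X : Polynomial ℝ) n))

/-- eval at 0 of the derivative of the rising factorial of C x + X -/
noncomputable def Ev (x : ℝ) (k : ℕ) : ℝ :=
  Polynomial.eval 0 (Polynomial.derivative (rf (Polynomial.C x + Polynomial.X) k))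

lemma eval0_rfX (n : ℕ) : Polynomial.eval 0 (rf (Polynomial.X : Polynomial ℝ) n) = rf (0:ℝ) n := by
  have := rf_map (Polynomial.evalRingHom (0:ℝ)) (Polynomial.X : Polynomial ℝ) n
  simpa using this

lemma eval0_rfCX (x : ℝ) (k : ℕ) :
    Polynomial.eval 0 (rf (Polynomial.C x + Polynomial.X) k) = rf x k := by
  have := rf_map (Polynomial.evalRingHom (0:ℝ)) (Polynomial.C x + Polynomial.X) k
  simpa using this

@[simp] lemma rf_zero_left (n : ℕ) : rf (0:ℝ) (n+1) = 0 := by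
  rw [rf_succ']
  simp

@[simp] lemma Dv_zero : Dv 0 = 0 := by simp [Dv]

lemma Dv_succ (n : ℕ) : Dv (n+1) = Dv n * n + rf (0:ℝ) n := by
  unfold Dv
  rw [rf_succ, Polynomial.derivative_mul]
  simp [eval0_rfX]

lemma Dv_eq (n : ℕ) : Dv (n+1) = (n.factorial : ℝ) := by
  induction n with
  | zero => simp [Dv_succ]
  | succ n ih =>
    rw [Dv_succ, ih, rf_zero_left, Nat.factorial_succ]
    push_cast
    ring

lemma Ev_succ (x : ℝ) (k : ℕ) : Ev x (k+1) = Ev x k * (x + k) + rf x k := by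
  unfold Ev
  rw [rf_succ, Polynomial.derivative_mul]
  simp [eval0_rfCX]

lemma Ev_eq (x : ℝ) (hx : 0 < x) (k : ℕ) :
    Ev x k = rf x k * ∑ t ∈ Finset.range k, (x + t)⁻¹ := by
  induction k with
  | zero => simp [Ev]
  | succ k ih =>
    have hxk : x + (k:ℝ) ≠ 0 := by positivity
    rw [Ev_succ, ih, Finset.sum_range_succ, rf_succ, mul_add, mul_add]
    have : rf x k * (x + (k:ℝ)) * (x + (k:ℝ))⁻¹ = rf x k := by
      field_simp
    rw [this]
    ring

end PolyPart

section AfreePart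

open Polynomial

lemma phi_term1 (K : ℝ) (i : ℕ) :
    Polynomial.eval 0 (Polynomial.derivative (Polynomial.C K * rf Polynomial.X i)) = K * Dv i := by
  rw [Polynomial.derivative_mul, Polynomial.derivative_C]
  simp [Dv]

lemma phi_term2 (u v : ℝ) (i k : ℕ) :
    Polynomial.eval 0 (Polynomial.derivative
        (Polynomial.C u * rf Polynomial.X i * rf (Polynomial.C v + Polynomial.X) k))
      = u * (Dv i * rf v k + rf (0:ℝ) i * Ev v k) := by
  rw [mul_assoc, Polynomial.derivative_mul, Polynomial.derivative_C, Polynomial.derivative_mul]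
  simp only [Polynomial.eval_mul, Polynomial.eval_add, Polynomial.eval_zero, zero_mul, zero_add,
    Polynomial.eval_C, eval0_rfX, eval0_rfCX]
  simp only [Dv, Ev]

lemma Afree (m : ℕ) (a b c : ℝ) :
    ∑ i ∈ Finset.range (m+1),
      ((m.choose i : ℝ) * rf (a+b+m) i * rf c (m-i) * rf (a+i) (m-i)) * Dv i
    = ∑ i ∈ Finset.range (m+1),
      ((m.choose i : ℝ) * ffa (b+m) i * rf (a+i) (m-i))
        * (Dv i * rf (c+i) (m-i) + rf (0:ℝ) i * Ev (c+i) (m-i)) := by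
  have master := master_identity m (Polynomial.C a) (Polynomial.C b) (Polynomial.C c)
    (Polynomial.X (R := ℝ))
  have happ := congrArg (fun p => Polynomial.eval 0 (Polynomial.derivative p)) master
  simp only [Polynomial.derivative_sum, Polynomial.eval_finset_sum] at happ
  have hL : ∀ i ∈ Finset.range (m+1),
      Polynomial.eval 0 (Polynomial.derivative
        ((m.choose i : ℝ[X]) * rf Polynomial.X i * rf (Polynomial.C a + Polynomial.C b + (m:ℝ[X])) i
          * rf (Polynomial.C c) (m-i) * rf (Polynomial.C a + (i:ℝ[X])) (m-i)))
      = ((m.choose i : ℝ) * rf (a+b+m) i * rf c (m-i) * rf (a+i) (m-i)) * Dv i := by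
    intro i _
    have hform : (m.choose i : ℝ[X]) * rf Polynomial.X i * rf (Polynomial.C a + Polynomial.C b + (m:ℝ[X])) i
          * rf (Polynomial.C c) (m-i) * rf (Polynomial.C a + (i:ℝ[X])) (m-i)
        = Polynomial.C ((m.choose i : ℝ) * rf (a+b+m) i * rf c (m-i) * rf (a+i) (m-i))
            * rf Polynomial.X i := by
      simp only [map_mul, rf_map (Polynomial.C : ℝ →+* ℝ[X]), map_add, Polynomial.C_eq_natCast,
        map_natCast]
      push_cast
      ring
    rw [hform, phi_term1]
  have hR : ∀ i ∈ Finset.range (m+1),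
      Polynomial.eval 0 (Polynomial.derivative
        ((m.choose i : ℝ[X]) * rf Polynomial.X i * ffa (Polynomial.C b + (m:ℝ[X])) i
          * rf (Polynomial.C c + (i:ℝ[X]) + Polynomial.X) (m-i) * rf (Polynomial.C a + (i:ℝ[X])) (m-i)))
      = ((m.choose i : ℝ) * ffa (b+m) i * rf (a+i) (m-i))
          * (Dv i * rf (c+i) (m-i) + rf (0:ℝ) i * Ev (c+i) (m-i)) := by
    intro i _
    have hform : (m.choose i : ℝ[X]) * rf Polynomial.X i * ffa (Polynomial.C b + (m:ℝ[X])) i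
          * rf (Polynomial.C c + (i:ℝ[X]) + Polynomial.X) (m-i) * rf (Polynomial.C a + (i:ℝ[X])) (m-i)
        = Polynomial.C ((m.choose i : ℝ) * ffa (b+m) i * rf (a+i) (m-i))
            * rf Polynomial.X i * rf (Polynomial.C (c + i) + Polynomial.X) (m-i) := by
      simp only [map_mul, rf_map (Polynomial.C : ℝ →+* ℝ[X]), ffa_map (Polynomial.C : ℝ →+* ℝ[X]),
        map_add, Polynomial.C_eq_natCast, map_natCast]
      push_cast
      ring
    rw [hform, phi_term2]
  rw [Finset.sum_congr rfl hL, Finset.sum_congr rfl hR] at happ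
  exact happ

end AfreePart

section GammaPart

lemma rf_pos {x : ℝ} (hx : 0 < x) (n : ℕ) : 0 < rf x n := by
  apply Finset.prod_pos
  intro j _
  positivity

lemma Gamma_rf {x : ℝ} (hx : 0 < x) (n : ℕ) :
    Real.Gamma (x + n) = Real.Gamma x * rf x n := by
  induction n with
  | zero => simp
  | succ n ih =>
    have hxn : x + (n:ℝ) ≠ 0 := by positivity
    rw [show x + ((n+1 : ℕ):ℝ) = (x + n) + 1 by push_cast; ring, Real.Gamma_add_one hxn, ih,
      rf_succ]
    ring

lemma Gamma_ffa {x : ℝ} (k : ℕ) (h : 0 < x + 1 - k) :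
    Real.Gamma (x + 1) = ffa x k * Real.Gamma (x + 1 - k) := by
  induction k with
  | zero => simp
  | succ k ih =>
    have hk : 0 < x + 1 - k := by
      have : ((k+1:ℕ):ℝ) = k + 1 := by push_cast; ring
      rw [this] at h
      linarith
    have hxk : x - (k:ℝ) ≠ 0 := by
      have : ((k+1:ℕ):ℝ) = k + 1 := by push_cast; ring
      rw [this] at h
      intro heq
      rw [show x = (k:ℝ) by linarith] at h
      linarith
    rw [ih hk, show x + 1 - (k:ℝ) = (x - k) + 1 by ring, Real.Gamma_add_one hxk, ffa_succ]
    rw [show x + 1 - ((k+1:ℕ):ℝ) = x - k by push_cast; ring]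
    ring

lemma hasDerivAt_Gamma {x : ℝ} (hx : 0 < x) :
    HasDerivAt Real.Gamma (rdigamma x * Real.Gamma x) x := by
  have hne : ∀ n : ℕ, x ≠ -(n:ℝ) := by
    intro n h
    have : (0:ℝ) ≤ n := Nat.cast_nonneg n
    linarith [h ▸ hx]
  have hd := (Real.differentiableAt_Gamma hne).hasDerivAt
  have hΓ : Real.Gamma x ≠ 0 := (Real.Gamma_pos_of_pos hx).ne'
  have : rdigamma x * Real.Gamma x = deriv Real.Gamma x := by
    rw [rdigamma]
    field_simp
  rw [this]
  exact hd

lemma rdigamma_add_one {x : ℝ} (hx : 0 < x) : rdigamma (x + 1) = rdigamma x + 1 / x := by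
  have hx1 : 0 < x + 1 := by linarith
  have h1 : HasDerivAt (fun y => Real.Gamma (y + 1))
      (rdigamma (x+1) * Real.Gamma (x+1)) x := by
    have := (hasDerivAt_Gamma hx1).comp x ((hasDerivAt_id x).add_const 1)
    simpa [Function.comp_def] using this
  have h2 : HasDerivAt (fun y => y * Real.Gamma y)
      (Real.Gamma x + x * (rdigamma x * Real.Gamma x)) x := by
    have := (hasDerivAt_id x).fun_mul (hasDerivAt_Gamma hx)
    simpa [mul_comm] using this
  have hfg : (fun y => Real.Gamma (y + 1)) =ᶠ[nhds x] (fun y => y * Real.Gamma y) := by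
    filter_upwards [eventually_ne_nhds hx.ne'] with y hy
    exact Real.Gamma_add_one hy
  have h1' : HasDerivAt (fun y => y * Real.Gamma y) (rdigamma (x+1) * Real.Gamma (x+1)) x :=
    (hfg.hasDerivAt_iff).mp h1
  have key := h1'.unique h2
  have hΓ : Real.Gamma x ≠ 0 := (Real.Gamma_pos_of_pos hx).ne'
  rw [Real.Gamma_add_one hx.ne'] at key
  have key2 : (rdigamma (x+1) * x) * Real.Gamma x = (1 + x * rdigamma x) * Real.Gamma x := by
    linear_combination key
  have key3 := mul_right_cancel₀ hΓ key2
  field_simp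
  linarith [key3]

lemma rdigamma_add_nat {x : ℝ} (hx : 0 < x) (n : ℕ) :
    rdigamma (x + n) = rdigamma x + ∑ t ∈ Finset.range n, (x + t)⁻¹ := by
  induction n with
  | zero => simp
  | succ n ih =>
    have hxn : 0 < x + (n:ℝ) := by positivity
    rw [show x + ((n+1:ℕ):ℝ) = (x + n) + 1 by push_cast; ring, rdigamma_add_one hxn, ih,
      Finset.sum_range_succ]
    rw [one_div]
    ring

end GammaPart

lemma sum_range_split (m : ℕ) (f : ℕ → ℝ) :
    ∑ i ∈ Finset.range (m+1), f i = f 0 + ∑ i ∈ Finset.Icc 1 m, f i := by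
  rw [Finset.sum_range_succ' f m, ← Finset.Ico_add_one_right_eq_Icc, Finset.sum_Ico_eq_sum_range]
  simp [add_comm 1]
  ring

lemma gammaA (m : ℕ) (hm : 1 ≤ m) {a c : ℝ} (ha : 0 < a) (hc : 0 < c)
    {b : ℝ} (hb : -1 < b) :
    ∑ i ∈ Finset.Icc 1 m, Real.Gamma (c - i + m) * Real.Gamma (a + b + i + m)
        / (Real.Gamma (a + i) * Real.Gamma ((m:ℝ) - i + 1) * i)
      = Real.Gamma (c + m) * Real.Gamma (a + b + m) *
        ((rdigamma (c + m) - rdigamma c) / (Real.Gamma a * Real.Gamma ((m:ℝ) + 1))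
          + Real.Gamma (b + m + 1) * Real.Gamma c *
            ∑ i ∈ Finset.Icc 1 m, 1 /
              (Real.Gamma (a + i) * Real.Gamma (c + i) * Real.Gamma ((m:ℝ) - i + 1)
                * Real.Gamma (b - i + m + 1) * i)) := by
  have hm1 : (1:ℝ) ≤ m := by exact_mod_cast hm
  have habm : 0 < a + b + m := by linarith
  have hΓa := Real.Gamma_pos_of_pos ha
  have hΓc := Real.Gamma_pos_of_pos hc
  have hΓabm := Real.Gamma_pos_of_pos habm
  set τ : ℝ := Real.Gamma (a+b+m) * Real.Gamma c / (Real.Gamma a * rf a m * (m.factorial:ℝ))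
    with hτ
  -- per-term lemma for the LHS
  have hL : ∀ j ∈ Finset.Icc 1 m,
      Real.Gamma (c - j + m) * Real.Gamma (a + b + j + m)
        / (Real.Gamma (a + j) * Real.Gamma ((m:ℝ) - j + 1) * j)
      = τ * (((m.choose j : ℝ) * rf (a+b+m) j * rf c (m-j) * rf (a+j) (m-j)) * Dv j) := by
    intro j hj
    rw [Finset.mem_Icc] at hj
    obtain ⟨k, rfl⟩ : ∃ k, j = k + 1 := ⟨j - 1, by omega⟩
    have hjm : k + 1 ≤ m := hj.2
    have hg1 : Real.Gamma (c - (k+1:ℕ) + m) = Real.Gamma c * rf c (m-(k+1)) := by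
      rw [show c - ((k+1:ℕ):ℝ) + m = c + ((m-(k+1):ℕ):ℝ) by
        rw [Nat.cast_sub hjm]; push_cast; ring]
      exact Gamma_rf hc _
    have hg2 : Real.Gamma (a + b + (k+1:ℕ) + m) = Real.Gamma (a+b+m) * rf (a+b+m) (k+1) := by
      rw [show a + b + ((k+1:ℕ):ℝ) + m = (a + b + m) + ((k+1:ℕ):ℝ) by ring]
      exact Gamma_rf habm _
    have hg3 : Real.Gamma (a + (k+1:ℕ)) = Real.Gamma a * rf a (k+1) := Gamma_rf ha _
    have hg4 : Real.Gamma ((m:ℝ) - (k+1:ℕ) + 1) = ((m-(k+1)).factorial : ℝ) := by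
      rw [show (m:ℝ) - ((k+1:ℕ):ℝ) + 1 = ((m-(k+1):ℕ):ℝ) + 1 by rw [Nat.cast_sub hjm]]
      exact Real.Gamma_nat_eq_factorial _
    have hsplitrf : rf a (k+1) * rf (a + ((k+1:ℕ):ℝ)) (m-(k+1)) = rf a m := by
      rw [← rf_add_nat]
      congr 1
      omega
    have h1 : m.choose (k+1) * ((k+1) * k.factorial) * (m-(k+1)).factorial = m.factorial := by
      rw [← Nat.factorial_succ]
      exact Nat.choose_mul_factorial_mul_factorial hjm
    have hfactR : (m.factorial : ℝ) = (m.choose (k+1) : ℝ) * ((k+1:ℕ):ℝ) * (k.factorial : ℝ)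
        * ((m-(k+1)).factorial : ℝ) := by
      rw [← h1]
      push_cast
      ring
    have hrfa := rf_pos ha (k+1)
    have hrfa2 := rf_pos (by positivity : (0:ℝ) < a + ((k+1:ℕ):ℝ)) (m-(k+1))
    have hch : (0:ℝ) < (m.choose (k+1) : ℝ) := by exact_mod_cast Nat.choose_pos hjm
    have hfk : (0:ℝ) < ((m-(k+1)).factorial : ℝ) := by positivity
    have hkf : (0:ℝ) < (k.factorial : ℝ) := by positivity
    rw [hg1, hg2, hg3, hg4, Dv_eq, hτ, ← hsplitrf, hfactR]
    set K := ((k+1:ℕ):ℝ) with hK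
    have hKpos : (0:ℝ) < K := by rw [hK]; positivity
    field_simp
  -- the i = 0 term of the RHS of Afree
  have hR0 : Real.Gamma (c + m) * Real.Gamma (a + b + m)
        * ((rdigamma (c + m) - rdigamma c) / (Real.Gamma a * Real.Gamma ((m:ℝ) + 1)))
      = τ * (((m.choose 0 : ℝ) * ffa (b+m) 0 * rf (a+(0:ℕ)) (m-0))
          * (Dv 0 * rf (c+(0:ℕ)) (m-0) + rf (0:ℝ) 0 * Ev (c+(0:ℕ)) (m-0))) := by
    have hψ : ∑ t ∈ Finset.range m, (c + t)⁻¹ = rdigamma (c + m) - rdigamma c := by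
      rw [rdigamma_add_nat hc m]
      ring
    have hEv : Ev c m = rf c m * (rdigamma (c + m) - rdigamma c) := by
      rw [Ev_eq c hc m, hψ]
    have hgcm : Real.Gamma (c + m) = Real.Gamma c * rf c m := Gamma_rf hc m
    have hgm1 : Real.Gamma ((m:ℝ) + 1) = (m.factorial : ℝ) := Real.Gamma_nat_eq_factorial m
    have hrfam := rf_pos ha m
    have hrfcm := rf_pos hc m
    have hfm : (0:ℝ) < (m.factorial : ℝ) := by positivity
    simp only [Nat.cast_zero, add_zero, Nat.sub_zero, Nat.choose_zero_right, Nat.cast_one,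
      ffa_zero, rf_zero, Dv_zero, zero_mul, one_mul, zero_add, mul_one]
    rw [hEv, hgcm, hgm1, hτ]
    field_simp
  -- per-term lemma for the RHS
  have hR : ∀ j ∈ Finset.Icc 1 m,
      Real.Gamma (c + m) * Real.Gamma (a + b + m) * (Real.Gamma (b + m + 1) * Real.Gamma c *
          (1 / (Real.Gamma (a + j) * Real.Gamma (c + j) * Real.Gamma ((m:ℝ) - j + 1)
            * Real.Gamma (b - j + m + 1) * j)))
      = τ * (((m.choose j : ℝ) * ffa (b+m) j * rf (a+j) (m-j))
          * (Dv j * rf (c+j) (m-j) + rf (0:ℝ) j * Ev (c+j) (m-j))) := by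
    intro j hj
    rw [Finset.mem_Icc] at hj
    obtain ⟨k, rfl⟩ : ∃ k, j = k + 1 := ⟨j - 1, by omega⟩
    have hjm : k + 1 ≤ m := hj.2
    have hjmR : ((k+1:ℕ):ℝ) ≤ (m:ℝ) := by exact_mod_cast hjm
    have hg3 : Real.Gamma (a + (k+1:ℕ)) = Real.Gamma a * rf a (k+1) := Gamma_rf ha _
    have hg4 : Real.Gamma ((m:ℝ) - (k+1:ℕ) + 1) = ((m-(k+1)).factorial : ℝ) := by
      rw [show (m:ℝ) - ((k+1:ℕ):ℝ) + 1 = ((m-(k+1):ℕ):ℝ) + 1 by rw [Nat.cast_sub hjm]]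
      exact Real.Gamma_nat_eq_factorial _
    have hcj : (0:ℝ) < c + ((k+1:ℕ):ℝ) := by positivity
    have hg6 : Real.Gamma (c + m) = Real.Gamma (c + (k+1:ℕ)) * rf (c + ((k+1:ℕ):ℝ)) (m-(k+1)) := by
      rw [show c + (m:ℝ) = (c + ((k+1:ℕ):ℝ)) + ((m-(k+1):ℕ):ℝ) by
        rw [Nat.cast_sub hjm]; push_cast; ring]
      exact Gamma_rf hcj _
    have hbmj : 0 < b + (m:ℝ) + 1 - ((k+1:ℕ):ℝ) := by linarith
    have hg5 : Real.Gamma (b + m + 1) = ffa (b + (m:ℝ)) (k+1)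
        * Real.Gamma (b - (k+1:ℕ) + m + 1) := by
      have h := Gamma_ffa (x := b + (m:ℝ)) (k+1) hbmj
      rw [show b + (m:ℝ) + 1 - ((k+1:ℕ):ℝ) = b - ((k+1:ℕ):ℝ) + m + 1 by ring] at h
      exact h
    have hsplitrf : rf a (k+1) * rf (a + ((k+1:ℕ):ℝ)) (m-(k+1)) = rf a m := by
      rw [← rf_add_nat]
      congr 1
      omega
    have h1 : m.choose (k+1) * ((k+1) * k.factorial) * (m-(k+1)).factorial = m.factorial := by
      rw [← Nat.factorial_succ]
      exact Nat.choose_mul_factorial_mul_factorial hjm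
    have hfactR : (m.factorial : ℝ) = (m.choose (k+1) : ℝ) * ((k+1:ℕ):ℝ) * (k.factorial : ℝ)
        * ((m-(k+1)).factorial : ℝ) := by
      rw [← h1]
      push_cast
      ring
    have hrfa := rf_pos ha (k+1)
    have hrfa2 := rf_pos (by positivity : (0:ℝ) < a + ((k+1:ℕ):ℝ)) (m-(k+1))
    have hrfcj := rf_pos hcj (m-(k+1))
    have hΓcj := Real.Gamma_pos_of_pos hcj
    have hΓbmj : 0 < Real.Gamma (b - ((k+1:ℕ):ℝ) + m + 1) := by
      apply Real.Gamma_pos_of_pos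
      linarith
    have hch : (0:ℝ) < (m.choose (k+1) : ℝ) := by exact_mod_cast Nat.choose_pos hjm
    have hfk : (0:ℝ) < ((m-(k+1)).factorial : ℝ) := by positivity
    have hkf : (0:ℝ) < (k.factorial : ℝ) := by positivity
    rw [hg3, hg4, hg5, hg6, Dv_eq, rf_zero_left, zero_mul, add_zero, hτ, ← hsplitrf, hfactR]
    set K := ((k+1:ℕ):ℝ) with hK
    have hKpos : (0:ℝ) < K := by rw [hK]; positivity
    field_simp
  have hsum : ∑ i ∈ Finset.Icc 1 m,
        τ * (((m.choose i : ℝ) * ffa (b+m) i * rf (a+i) (m-i))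
          * (Dv i * rf (c+i) (m-i) + rf (0:ℝ) i * Ev (c+i) (m-i)))
      = Real.Gamma (c + m) * Real.Gamma (a + b + m) * (Real.Gamma (b + m + 1) * Real.Gamma c *
          ∑ i ∈ Finset.Icc 1 m, 1 /
            (Real.Gamma (a + i) * Real.Gamma (c + i) * Real.Gamma ((m:ℝ) - i + 1)
              * Real.Gamma (b - i + m + 1) * i)) := by
    rw [Finset.mul_sum, Finset.mul_sum]
    exact Finset.sum_congr rfl (fun j hj => (hR j hj).symm)
  calc ∑ i ∈ Finset.Icc 1 m, Real.Gamma (c - i + m) * Real.Gamma (a + b + i + m)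
        / (Real.Gamma (a + i) * Real.Gamma ((m:ℝ) - i + 1) * i)
      = ∑ i ∈ Finset.Icc 1 m,
          τ * (((m.choose i : ℝ) * rf (a+b+m) i * rf c (m-i) * rf (a+i) (m-i)) * Dv i) :=
        Finset.sum_congr rfl hL
    _ = τ * ∑ i ∈ Finset.range (m+1),
          ((m.choose i : ℝ) * rf (a+b+m) i * rf c (m-i) * rf (a+i) (m-i)) * Dv i := by
        rw [← Finset.mul_sum, sum_range_split m
          (fun i => ((m.choose i : ℝ) * rf (a+b+m) i * rf c (m-i) * rf (a+i) (m-i)) * Dv i)]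
        simp only [Dv_zero, mul_zero, zero_add]
    _ = τ * ∑ i ∈ Finset.range (m+1),
          ((m.choose i : ℝ) * ffa (b+m) i * rf (a+i) (m-i))
            * (Dv i * rf (c+i) (m-i) + rf (0:ℝ) i * Ev (c+i) (m-i)) := by rw [Afree]
    _ = τ * (((m.choose 0 : ℝ) * ffa (b+m) 0 * rf (a+(0:ℕ)) (m-0))
            * (Dv 0 * rf (c+(0:ℕ)) (m-0) + rf (0:ℝ) 0 * Ev (c+(0:ℕ)) (m-0))
          + ∑ i ∈ Finset.Icc 1 m,
            ((m.choose i : ℝ) * ffa (b+m) i * rf (a+i) (m-i))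
              * (Dv i * rf (c+i) (m-i) + rf (0:ℝ) i * Ev (c+i) (m-i))) := by
        rw [sum_range_split m
          (fun i => ((m.choose i : ℝ) * ffa (b+m) i * rf (a+i) (m-i))
            * (Dv i * rf (c+i) (m-i) + rf (0:ℝ) i * Ev (c+i) (m-i)))]
    _ = Real.Gamma (c + m) * Real.Gamma (a + b + m) *
        ((rdigamma (c + m) - rdigamma c) / (Real.Gamma a * Real.Gamma ((m:ℝ) + 1))
          + Real.Gamma (b + m + 1) * Real.Gamma c *
            ∑ i ∈ Finset.Icc 1 m, 1 /
              (Real.Gamma (a + i) * Real.Gamma (c + i) * Real.Gamma ((m:ℝ) - i + 1)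
                * Real.Gamma (b - i + m + 1) * i)) := by
        rw [mul_add, Finset.mul_sum, hsum, ← hR0, mul_add]

theorem gamma_ratio_digamma_sum (m : ℕ) (hm : 1 ≤ m) (a b c : ℝ)
    (ha : 0 < a) (hb : 0 ≤ b) (hc : 0 < c) :
    ∑ i ∈ Finset.Icc 1 m,
        (Real.Gamma (c - i + m) * Real.Gamma (a + b + i + m)
          / (Real.Gamma (a + i) * Real.Gamma ((m : ℝ) - i + 1) * i))
          * rdigamma (a + b + i + m) =
      Real.Gamma (c + m) * Real.Gamma (a + b + m) *
        ((rdigamma (a + b + m) / (Real.Gamma a * Real.Gamma ((m : ℝ) + 1)))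
            * (rdigamma (c + m) - rdigamma c)
          + Real.Gamma (b + m + 1) * Real.Gamma c *
            ∑ i ∈ Finset.Icc 1 m,
              (rdigamma (a + b + m) - rdigamma (b - i + m + 1) + rdigamma (b + m + 1))
                / (Real.Gamma (a + i) * Real.Gamma (c + i) * Real.Gamma ((m : ℝ) - i + 1)
                  * Real.Gamma (b - i + m + 1) * i)) := by
  have hm1 : (1:ℝ) ≤ m := by exact_mod_cast hm
  have habm : 0 < a + b + m := by linarith
  have hbm1 : 0 < b + m + 1 := by linarith
  have hΓa := Real.Gamma_pos_of_pos ha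
  have hΓc := Real.Gamma_pos_of_pos hc
  have hΓabm := Real.Gamma_pos_of_pos habm
  have hΓcm := Real.Gamma_pos_of_pos (by linarith : (0:ℝ) < c + m)
  have hΓbm1 := Real.Gamma_pos_of_pos hbm1
  have hΓm1 : 0 < Real.Gamma ((m:ℝ) + 1) := Real.Gamma_pos_of_pos (by linarith)
  -- the constant (in t) part
  set K1 : ℝ := (rdigamma (c + m) - rdigamma c) / (Real.Gamma a * Real.Gamma ((m:ℝ) + 1))
    with hK1
  -- derivative of the left side
  have hF : HasDerivAt (fun t : ℝ => ∑ i ∈ Finset.Icc 1 m,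
      Real.Gamma (c - i + m) * Real.Gamma (a + t + i + m)
        / (Real.Gamma (a + i) * Real.Gamma ((m:ℝ) - i + 1) * i))
      (∑ i ∈ Finset.Icc 1 m,
        (Real.Gamma (c - i + m) * Real.Gamma (a + b + i + m)
          / (Real.Gamma (a + i) * Real.Gamma ((m : ℝ) - i + 1) * i))
          * rdigamma (a + b + i + m)) b := by
    apply HasDerivAt.fun_sum
    intro i hi
    rw [Finset.mem_Icc] at hi
    have him : (i:ℝ) ≤ m := by exact_mod_cast hi.2
    have habim : 0 < a + b + i + m := by positivity
    have inner : HasDerivAt (fun t : ℝ => a + t + i + m) 1 b := by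
      simpa using (((hasDerivAt_id b).const_add a).add_const (i:ℝ)).add_const (m:ℝ)
    have h2 : HasDerivAt (fun t : ℝ => Real.Gamma (a + t + i + m))
        (rdigamma (a + b + i + m) * Real.Gamma (a + b + i + m) * 1) b :=
      by exact (hasDerivAt_Gamma habim).comp b inner
    have h3 := (h2.const_mul (Real.Gamma (c - i + m))).div_const
      (Real.Gamma (a + i) * Real.Gamma ((m:ℝ) - i + 1) * i)
    refine h3.congr_deriv ?_
    ring
  -- derivative of the inner sum of the right side
  have hfi : ∀ i ∈ Finset.Icc 1 m, HasDerivAt (fun t : ℝ =>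
        1 / (Real.Gamma (a + i) * Real.Gamma (c + i) * Real.Gamma ((m:ℝ) - i + 1)
          * Real.Gamma (t - i + m + 1) * i))
      (-(rdigamma (b - i + m + 1))
        / (Real.Gamma (a + i) * Real.Gamma (c + i) * Real.Gamma ((m:ℝ) - i + 1)
          * Real.Gamma (b - i + m + 1) * i)) b := by
    intro i hi
    rw [Finset.mem_Icc] at hi
    have him : (i:ℝ) ≤ m := by exact_mod_cast hi.2
    have hi1 : (1:ℝ) ≤ i := by exact_mod_cast hi.1
    have hbim : 0 < b - i + m + 1 := by linarith
    have hΓbim := Real.Gamma_pos_of_pos hbim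
    have hΓai := Real.Gamma_pos_of_pos (by positivity : (0:ℝ) < a + i)
    have hΓci := Real.Gamma_pos_of_pos (by positivity : (0:ℝ) < c + i)
    have hΓmi : 0 < Real.Gamma ((m:ℝ) - i + 1) := Real.Gamma_pos_of_pos (by linarith)
    have hipos : (0:ℝ) < i := by linarith
    have inner : HasDerivAt (fun t : ℝ => t - i + m + 1) 1 b := by
      simpa using (((hasDerivAt_id b).sub_const (i:ℝ)).add_const (m:ℝ)).add_const 1
    have h2 : HasDerivAt (fun t : ℝ => Real.Gamma (t - i + m + 1))
        (rdigamma (b - i + m + 1) * Real.Gamma (b - i + m + 1) * 1) b :=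
      by exact (hasDerivAt_Gamma hbim).comp b inner
    have h3 : HasDerivAt (fun t : ℝ =>
        Real.Gamma (a + i) * Real.Gamma (c + i) * Real.Gamma ((m:ℝ) - i + 1)
          * Real.Gamma (t - i + m + 1) * i)
        (Real.Gamma (a + i) * Real.Gamma (c + i) * Real.Gamma ((m:ℝ) - i + 1)
          * (rdigamma (b - i + m + 1) * Real.Gamma (b - i + m + 1) * 1) * i) b := by
      exact ((h2.const_mul
        (Real.Gamma (a + i) * Real.Gamma (c + i) * Real.Gamma ((m:ℝ) - i + 1))).mul_const (i:ℝ))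
    have hden : Real.Gamma (a + i) * Real.Gamma (c + i) * Real.Gamma ((m:ℝ) - i + 1)
        * Real.Gamma (b - i + m + 1) * i ≠ 0 := by positivity
    have h4 := (hasDerivAt_const b (1:ℝ)).div h3 hden
    refine h4.congr_deriv ?_
    field_simp
    ring
  -- derivative of the right side
  have hA : HasDerivAt (fun t : ℝ => Real.Gamma (c + m) * Real.Gamma (a + t + m))
      (Real.Gamma (c + m) * (rdigamma (a + b + m) * Real.Gamma (a + b + m) * 1)) b := by
    have inner : HasDerivAt (fun t : ℝ => a + t + m) 1 b := by
      simpa using ((hasDerivAt_id b).const_add a).add_const (m:ℝ)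
    exact ((hasDerivAt_Gamma habm).comp b inner).const_mul (Real.Gamma (c + m))
  have hBM : HasDerivAt (fun t : ℝ => Real.Gamma (t + m + 1))
      (rdigamma (b + m + 1) * Real.Gamma (b + m + 1) * 1) b := by
    have inner : HasDerivAt (fun t : ℝ => t + m + 1) 1 b := by
      simpa using ((hasDerivAt_id b).add_const (m:ℝ)).add_const 1
    exact (hasDerivAt_Gamma hbm1).comp b inner
  have hS : HasDerivAt (fun t : ℝ => ∑ i ∈ Finset.Icc 1 m,
      1 / (Real.Gamma (a + i) * Real.Gamma (c + i) * Real.Gamma ((m:ℝ) - i + 1)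
        * Real.Gamma (t - i + m + 1) * i))
      (∑ i ∈ Finset.Icc 1 m, -(rdigamma (b - i + m + 1))
        / (Real.Gamma (a + i) * Real.Gamma (c + i) * Real.Gamma ((m:ℝ) - i + 1)
          * Real.Gamma (b - i + m + 1) * i)) b := HasDerivAt.fun_sum hfi
  have hbracket : HasDerivAt (fun t : ℝ => K1 + Real.Gamma (t + m + 1) * Real.Gamma c *
      ∑ i ∈ Finset.Icc 1 m,
        1 / (Real.Gamma (a + i) * Real.Gamma (c + i) * Real.Gamma ((m:ℝ) - i + 1)
          * Real.Gamma (t - i + m + 1) * i))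
      ((rdigamma (b + m + 1) * Real.Gamma (b + m + 1) * 1) * Real.Gamma c
          * (∑ i ∈ Finset.Icc 1 m,
            1 / (Real.Gamma (a + i) * Real.Gamma (c + i) * Real.Gamma ((m:ℝ) - i + 1)
              * Real.Gamma (b - i + m + 1) * i))
        + Real.Gamma (b + m + 1) * Real.Gamma c *
          ∑ i ∈ Finset.Icc 1 m, -(rdigamma (b - i + m + 1))
            / (Real.Gamma (a + i) * Real.Gamma (c + i) * Real.Gamma ((m:ℝ) - i + 1)
              * Real.Gamma (b - i + m + 1) * i)) b := by
    have := ((hBM.mul_const (Real.Gamma c)).fun_mul hS).const_add K1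
    convert this using 1
    try ring
  have hG : HasDerivAt (fun t : ℝ => Real.Gamma (c + m) * Real.Gamma (a + t + m) *
      (K1 + Real.Gamma (t + m + 1) * Real.Gamma c *
        ∑ i ∈ Finset.Icc 1 m,
          1 / (Real.Gamma (a + i) * Real.Gamma (c + i) * Real.Gamma ((m:ℝ) - i + 1)
            * Real.Gamma (t - i + m + 1) * i)))
      (Real.Gamma (c + m) * (rdigamma (a + b + m) * Real.Gamma (a + b + m) * 1) *
        (K1 + Real.Gamma (b + m + 1) * Real.Gamma c *
          ∑ i ∈ Finset.Icc 1 m,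
            1 / (Real.Gamma (a + i) * Real.Gamma (c + i) * Real.Gamma ((m:ℝ) - i + 1)
              * Real.Gamma (b - i + m + 1) * i))
        + Real.Gamma (c + m) * Real.Gamma (a + b + m) *
          ((rdigamma (b + m + 1) * Real.Gamma (b + m + 1) * 1) * Real.Gamma c
              * (∑ i ∈ Finset.Icc 1 m,
                1 / (Real.Gamma (a + i) * Real.Gamma (c + i) * Real.Gamma ((m:ℝ) - i + 1)
                  * Real.Gamma (b - i + m + 1) * i))
            + Real.Gamma (b + m + 1) * Real.Gamma c *
              ∑ i ∈ Finset.Icc 1 m, -(rdigamma (b - i + m + 1))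
                / (Real.Gamma (a + i) * Real.Gamma (c + i) * Real.Gamma ((m:ℝ) - i + 1)
                  * Real.Gamma (b - i + m + 1) * i))) b := hA.fun_mul hbracket
  -- the two functions agree near b
  have heq : (fun t : ℝ => ∑ i ∈ Finset.Icc 1 m,
      Real.Gamma (c - i + m) * Real.Gamma (a + t + i + m)
        / (Real.Gamma (a + i) * Real.Gamma ((m:ℝ) - i + 1) * i))
      =ᶠ[nhds b] (fun t : ℝ => Real.Gamma (c + m) * Real.Gamma (a + t + m) *
      (K1 + Real.Gamma (t + m + 1) * Real.Gamma c *
        ∑ i ∈ Finset.Icc 1 m,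
          1 / (Real.Gamma (a + i) * Real.Gamma (c + i) * Real.Gamma ((m:ℝ) - i + 1)
            * Real.Gamma (t - i + m + 1) * i))) := by
    have hopen : Set.Ioi (-1:ℝ) ∈ nhds b := by
      apply isOpen_Ioi.mem_nhds
      simp only [Set.mem_Ioi]
      linarith
    filter_upwards [hopen] with t ht
    simp only [Set.mem_Ioi] at ht
    exact gammaA m hm ha hc ht
  have hF' := (heq.hasDerivAt_iff).mpr hG
  have huniq := hF.unique hF'
  rw [huniq]
  have hT : (∑ i ∈ Finset.Icc 1 m,
        (rdigamma (a + b + m) - rdigamma (b - i + m + 1) + rdigamma (b + m + 1))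
          / (Real.Gamma (a + i) * Real.Gamma (c + i) * Real.Gamma ((m:ℝ) - i + 1)
            * Real.Gamma (b - i + m + 1) * i))
      = (rdigamma (a + b + m) + rdigamma (b + m + 1)) *
          (∑ i ∈ Finset.Icc 1 m,
            1 / (Real.Gamma (a + i) * Real.Gamma (c + i) * Real.Gamma ((m:ℝ) - i + 1)
              * Real.Gamma (b - i + m + 1) * i))
        + ∑ i ∈ Finset.Icc 1 m, -(rdigamma (b - i + m + 1))
            / (Real.Gamma (a + i) * Real.Gamma (c + i) * Real.Gamma ((m:ℝ) - i + 1)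
              * Real.Gamma (b - i + m + 1) * i) := by
    rw [Finset.mul_sum, ← Finset.sum_add_distrib]
    apply Finset.sum_congr rfl
    intro i _
    ring
  rw [hT, hK1]
  ring
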